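/- The normalizing constants a_m satisfy a_m · [log(m²/(12π))]^{1/3} → (4/3)^{1/2} · (3/4)^{1/6} as m → ∞; that is, a_m ~ (4/3)^{1/2}(3/4)^{1/6} · log^{−1/3}(m²/(12π)). -/

import Mathlib

/-!
Write `L m = log (m²/(12π))`. Since `1 - F (b m) = 1/m`, taking logarithms in the tail
asymptotics of `1 - F` at `b m` gives `(2/3) (b m)^{3/2} ~ log m`, hence
`L m ~ (4/3) (b m)^{3/2}`. Dividing the two tail asymptotics gives `m R (b m) ~ (b m)^{1/2}`, and
`F' = F R` with `F (b m) → 1` turns this into `a m ~ (b m)^{-1/2}`. Therefore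
`a m L(m)^{1/3} → (4/3)^{1/3} = (4/3)^{1/2} (3/4)^{1/6}`.
-/

open Real Filter Asymptotics Topology

theorem StrictMono.tendsto_atTop_of_tendsto_comp {α β ι : Type*} [LinearOrder α] [NoMaxOrder α]
    [LinearOrder β] [TopologicalSpace β] [OrderTopology β] {F : α → β} {c : β} {u : ι → α}
    {l : Filter ι} (hF : StrictMono F) (hFc : Tendsto F atTop (𝓝 c))
    (hu : Tendsto (F ∘ u) l (𝓝 c)) : Tendsto u l atTop := by
  refine Filter.tendsto_atTop.mpr fun M => ?_
  obtain ⟨M', hM'⟩ := exists_gt M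
  have hlt : F M < c := (hF hM').trans_le (hF.monotone.ge_of_tendsto hFc M')
  filter_upwards [hu.eventually (eventually_gt_nhds hlt)] with i hi
  exact (hF.lt_iff_lt.mp hi).le

theorem isEquivalent_log_mul_rpow_mul_exp {c p κ q : ℝ} (hc : c ≠ 0) (hκ : κ ≠ 0) (hq : 0 < q) :
    (fun x => log (c * x ^ p * exp (κ * x ^ q))) ~[atTop] fun x => κ * x ^ q := by
  have hconst : (fun _ : ℝ => log c) =o[atTop] fun x => x ^ q :=
    isLittleO_const_left.mpr <| Or.inr <|
      tendsto_norm_atTop_atTop.comp (tendsto_rpow_atTop hq)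
  have hlower : (fun x => log c + p * log x) =o[atTop] fun x => κ * x ^ q :=
    (hconst.add ((isLittleO_log_rpow_atTop hq).const_mul_left p)).const_mul_right hκ
  refine (hlower.add_isEquivalent IsEquivalent.refl).congr_left ?_
  filter_upwards [eventually_gt_atTop 0] with x hx
  rw [log_mul (mul_ne_zero hc (rpow_pos_of_pos hx p).ne') (exp_ne_zero _),
    log_mul hc (rpow_pos_of_pos hx p).ne', log_rpow hx,
    log_exp]
  rfl

theorem isEquivalent_log_of_tendsto_mul_exp_div {ι : Type*} {l : Filter ι} {x y : ι → ℝ}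
    {c p κ q : ℝ} (hc : c ≠ 0) (hκ : κ ≠ 0) (hq : 0 < q) (hx : Tendsto x l atTop)
    (hy : Tendsto y l atTop)
    (h : Tendsto (fun i => c * x i ^ p * exp (κ * x i ^ q) / y i) l (𝓝 1)) :
    (fun i => κ * x i ^ q) ~[l] fun i => log (y i) :=
  ((isEquivalent_log_mul_rpow_mul_exp hc hκ hq).comp_tendsto hx).symm.trans
    ((isEquivalent_of_tendsto_one h).log hy)

theorem isEquivalent_log_sq_div {ι : Type*} {l : Filter ι} {y : ι → ℝ} {d : ℝ} (hd : d ≠ 0)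
    (hy : Tendsto y l atTop) :
    (fun i => log (y i ^ 2 / d)) ~[l] fun i => 2 * log (y i) := by
  have h2log : Tendsto (fun i => 2 * log (y i)) l atTop :=
    (tendsto_log_atTop.comp hy).const_mul_atTop two_pos
  refine (IsEquivalent.refl.add_const_of_norm_tendsto_atTop (c := -log d)
    (tendsto_norm_atTop_atTop.comp h2log)).congr_left ?_
  filter_upwards [hy.eventually_gt_atTop 0] with i hi
  rw [log_div (by positivity) hd, log_pow]
  push_cast
  ring

theorem tendsto_div_of_isEquivalent_const_mul {ι : Type*} {l : Filter ι} {u v : ι → ℝ} {k : ℝ}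
    (h : u ~[l] fun i => k * v i) (hv : ∀ᶠ i in l, v i ≠ 0) :
    Tendsto (fun i => u i / v i) l (𝓝 k) := by
  refine (h.div (IsEquivalent.refl (u := v))).congr_right ?_ |>.tendsto_const
  filter_upwards [hv] with i hi
  simp [hi]

theorem tendsto_log_sq_div_div_rpow {ι : Type*} {l : Filter ι} {x y : ι → ℝ}
    {c p κ q d : ℝ} (hc : c ≠ 0) (hκ : κ ≠ 0) (hq : 0 < q) (hd : d ≠ 0)
    (hx : Tendsto x l atTop) (hy : Tendsto y l atTop)
    (h : Tendsto (fun i => c * x i ^ p * exp (κ * x i ^ q) / y i) l (𝓝 1)) :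
    Tendsto (fun i => log (y i ^ 2 / d) / x i ^ q) l (𝓝 (2 * κ)) := by
  have hlog := isEquivalent_log_of_tendsto_mul_exp_div hc hκ hq hx hy h
  refine tendsto_div_of_isEquivalent_const_mul ?_ ?_
  · refine (isEquivalent_log_sq_div hd hy).trans ?_
    refine ((IsEquivalent.refl (u := fun _ => (2:ℝ))).mul hlog.symm).congr_right ?_
    exact .of_forall fun i => (mul_assoc _ _ _).symm
  · filter_upwards [hx.eventually_gt_atTop 0] with i hi
    positivity

/-- With `f = F (b m)`, `r = R (b m)`, `x = b m`, `L = L m`, each factor on the right converges: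
`f⁻¹ → 1`, the quotient of the two tail expressions `→ 1`, and `L / x^{3/2} → 4/3`. -/
theorem one_div_mul_mul_rpow_eq {m f r x L c E : ℝ} (hm : m ≠ 0) (hx : 0 < x) (hL : 0 ≤ L)
    (hc : c ≠ 0) (hE : E ≠ 0) :
    1 / (m * (f * r)) * L ^ (1/3 : ℝ) =
      f⁻¹ * (c * x ^ (3/4 : ℝ) * E / m / (c * x ^ (1/4 : ℝ) * E * r)) *
        (L / x ^ (3/2 : ℝ)) ^ (1/3 : ℝ) := by
  have hsplit : x ^ (3/4 : ℝ) = x ^ (1/2 : ℝ) * x ^ (1/4 : ℝ) := by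
    rw [← rpow_add hx]; norm_num
  have hcube : (x ^ (3/2 : ℝ)) ^ (1/3 : ℝ) = x ^ (1/2 : ℝ) := by
    rw [← rpow_mul hx.le]; norm_num
  have h14 : x ^ (1/4 : ℝ) ≠ 0 := (rpow_pos_of_pos hx _).ne'
  have h12 : x ^ (1/2 : ℝ) ≠ 0 := (rpow_pos_of_pos hx _).ne'
  rw [div_rpow hL (rpow_nonneg hx.le _), hcube, hsplit]
  rcases eq_or_ne f 0 with rfl | hf
  · simp
  rcases eq_or_ne r 0 with rfl | hr
  · simp
  field_simp

theorem rpow_third_eq_rpow_half_mul_inv_rpow_sixth {x : ℝ} (hx : 0 < x) :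
    x ^ (1/3 : ℝ) = x ^ (1/2 : ℝ) * x⁻¹ ^ (1/6 : ℝ) := by
  rw [inv_rpow hx.le, ← rpow_neg hx.le, ← rpow_add hx]
  norm_num

theorem am_asymptotic_general
    (F R : ℝ → ℝ) (a b : ℕ → ℝ)
    (hFmono : StrictMono F)
    (hF1 : Tendsto F atTop (nhds 1))
    (hfactor : ∀ x, deriv F x = F x * R x)
    (htail : Tendsto (fun x : ℝ =>
        4 * Real.sqrt π * x ^ ((3:ℝ)/4) * Real.exp ((2/3) * x ^ ((3:ℝ)/2)) * (1 - F x))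
      atTop (nhds 1))
    (hRtail : Tendsto (fun x : ℝ =>
        4 * Real.sqrt π * x ^ ((1:ℝ)/4) * Real.exp ((2/3) * x ^ ((3:ℝ)/2)) * R x)
      atTop (nhds 1))
    (hb : ∀ m : ℕ, 2 ≤ m → F (b m) = 1 - 1 / m)
    (ha : ∀ m : ℕ, 2 ≤ m → a m = 1 / (m * deriv F (b m))) :
    Tendsto (fun m : ℕ =>
        a m * (Real.log ((m : ℝ) ^ 2 / (12 * π))) ^ ((1:ℝ)/3))
      atTop (nhds (((4:ℝ)/3) ^ ((1:ℝ)/2) * ((3:ℝ)/4) ^ ((1:ℝ)/6))) := by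
  have hFb : Tendsto (F ∘ b) atTop (𝓝 1) := by
    have h := (tendsto_one_div_atTop_nhds_zero_nat (𝕜 := ℝ)).const_sub 1
    rw [sub_zero] at h
    refine h.congr' ?_
    filter_upwards [eventually_ge_atTop 2] with m hm using (hb m hm).symm
  have hbtop : Tendsto b atTop atTop := hFmono.tendsto_atTop_of_tendsto_comp hF1 hFb
  have htail_b : Tendsto (fun m : ℕ => 4 * √π * b m ^ (3/4 : ℝ) *
      exp (2/3 * b m ^ (3/2 : ℝ)) / m) atTop (𝓝 1) := by
    refine (htail.comp hbtop).congr' ?_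
    filter_upwards [eventually_ge_atTop 2] with m hm
    simp only [Function.comp, hb m hm, sub_sub_cancel, mul_one_div]
  have hLb := tendsto_log_sq_div_div_rpow (d := 12 * π) (by positivity) (by norm_num)
    (by norm_num) (by positivity) hbtop tendsto_natCast_atTop_atTop htail_b
  have hlim := ((hFb.inv₀ one_ne_zero).mul (htail_b.div (hRtail.comp hbtop) one_ne_zero)).mul
    (hLb.rpow_const (p := 1/3) (Or.inr (by norm_num)))
  rw [show (3/4 : ℝ) = (4/3)⁻¹ by norm_num,
    ← rpow_third_eq_rpow_half_mul_inv_rpow_sixth (by norm_num)]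
  norm_num at hlim
  refine hlim.congr' ?_
  filter_upwards [eventually_ge_atTop 2, hbtop.eventually_gt_atTop 0,
    hLb.eventually (eventually_gt_nhds (by norm_num : (0:ℝ) < 2 * (2/3)))] with m hm hbm hLm
  have hL : 0 < log ((m:ℝ) ^ 2 / (12 * π)) :=
    (div_pos_iff_of_pos_right (rpow_pos_of_pos hbm _)).mp hLm
  rw [ha m hm, hfactor]
  exact (one_div_mul_mul_rpow_eq (by positivity) hbm hL.le (by positivity) (exp_ne_zero _)).symm

/-- The Gumbel normalizing constants `a m` for the Tracy–Widom law satisfy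
`a m * (log (m^2/(12π)))^(1/3) → (4/3)^(1/2) * (3/4)^(1/6)` as `m → ∞`. -/
theorem am_asymptotic
    (F R : ℝ → ℝ) (a b : ℕ → ℝ)
    (hFdiff : Differentiable ℝ F)
    (hF'diff : Differentiable ℝ (deriv F))
    (hFmono : StrictMono F)
    (hF0 : Tendsto F atBot (nhds 0))
    (hF1 : Tendsto F atTop (nhds 1))
    (hRdiff : Differentiable ℝ R)
    (hfactor : ∀ x, deriv F x = F x * R x)
    (htail : Tendsto (fun x : ℝ =>
        4 * Real.sqrt π * x ^ ((3:ℝ)/4) * Real.exp ((2/3) * x ^ ((3:ℝ)/2)) * (1 - F x))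
      atTop (nhds 1))
    (hRtail : Tendsto (fun x : ℝ =>
        4 * Real.sqrt π * x ^ ((1:ℝ)/4) * Real.exp ((2/3) * x ^ ((3:ℝ)/2)) * R x)
      atTop (nhds 1))
    (hb : ∀ m : ℕ, 2 ≤ m → F (b m) = 1 - 1 / m)
    (ha : ∀ m : ℕ, 2 ≤ m → a m = 1 / (m * deriv F (b m))) :
    Tendsto (fun m : ℕ =>
        a m * (Real.log ((m : ℝ) ^ 2 / (12 * π))) ^ ((1:ℝ)/3))
      atTop (nhds (((4:ℝ)/3) ^ ((1:ℝ)/2) * ((3:ℝ)/4) ^ ((1:ℝ)/6))) :=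
  am_asymptotic_general F R a b hFmono hF1 hfactor htail hRtail hb ha
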